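/- Let K be a simplicial Abelian group and η, ρ twisting functions on a simplicial set X. Then there is an isomorphism of principal K-bundles over X between (K ×_η X) ⊗_K (K ×_ρ X) and K ×_{ηρ} X, given by [(k,x),(h,x)] ↦ (kh, x). In particular, the cohomology class corresponding to E ⊗_K F is the sum of the classes of E and F. -/

import Mathlib

open CategoryTheory Simplicial

/-- A graded family of face and degeneracy maps satisfies the simplicial identities
(and hence defines a simplicial set). -/
def IsSimplicial (obj : ℕ → Type)
    (d : ∀ n, Fin (n + 2) → obj (n + 1) → obj n)
    (s : ∀ n, Fin (n + 1) → obj n → obj (n + 1)) : Prop :=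
  (∀ (n : ℕ) (i j : Fin (n + 2)), i ≤ j →
      ∀ x : obj (n + 2), d n i (d (n + 1) j.succ x) = d n j (d (n + 1) i.castSucc x)) ∧
  (∀ (n : ℕ) (i j : Fin (n + 1)), i ≤ j →
      ∀ x : obj n, s (n + 1) j.succ (s n i x) = s (n + 1) i.castSucc (s n j x)) ∧
  (∀ (n : ℕ) (i : Fin (n + 2)) (j : Fin (n + 1)), i ≤ j.castSucc →
      ∀ x : obj (n + 1), d (n + 1) i.castSucc (s (n + 1) j.succ x) = s n j (d n i x)) ∧
  (∀ (n : ℕ) (i : Fin (n + 1)) (x : obj n), d n i.castSucc (s n i x) = x) ∧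
  (∀ (n : ℕ) (i : Fin (n + 1)) (x : obj n), d n i.succ (s n i x) = x) ∧
  (∀ (n : ℕ) (i : Fin (n + 2)) (j : Fin (n + 1)), j.castSucc < i →
      ∀ x : obj (n + 1), d (n + 1) i.succ (s (n + 1) j.castSucc x) = s n j (d n i x))

/-- The candidate face maps on the graded set `K_n × X_n` of the twisted product
`K ×_η X`: the `d₀`-face is twisted by `η`, all other faces act componentwise. -/
def twδ (K : SimplicialObject CommGrpCat.{0}) (X : SSet.{0})
    (η : ∀ n, X _⦋n + 1⦌ → (K _⦋n⦌ : Type)) {n : ℕ} (i : Fin (n + 2))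
    (p : (K _⦋n + 1⦌ : Type) × X _⦋n + 1⦌) : (K _⦋n⦌ : Type) × X _⦋n⦌ :=
  if i = 0 then (K.δ 0 p.1 * η n p.2, X.δ 0 p.2) else (K.δ i p.1, X.δ i p.2)

/-- The candidate degeneracy maps on the graded set `K_n × X_n`: they act componentwise. -/
def twσ (K : SimplicialObject CommGrpCat.{0}) (X : SSet.{0}) {n : ℕ} (i : Fin (n + 1))
    (p : (K _⦋n⦌ : Type) × X _⦋n⦌) : (K _⦋n + 1⦌ : Type) × X _⦋n + 1⦌ :=
  (K.σ i p.1, X.σ i p.2)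

/-- The defining identities of a twisting function `η = {η_n : X_n → K_{n-1}}`:
`d_i η(x) = η(d_{i+1} x)` for `i > 0`, `d_0 η(x) = η(d_1 x) · η(d_0 x)⁻¹`,
`η(s_0 x) = 1`, and `η(s_j x) = s_{j-1}(η(x))` for `j > 0`. -/
def IsTwisting (K : SimplicialObject CommGrpCat.{0}) (X : SSet.{0})
    (η : ∀ n, X _⦋n + 1⦌ → (K _⦋n⦌ : Type)) : Prop :=
  (∀ (n : ℕ) (x : X _⦋n + 2⦌),
      K.δ 0 (η (n + 1) x) = η n (X.δ 1 x) * (η n (X.δ 0 x))⁻¹) ∧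
  (∀ (n : ℕ) (i : Fin (n + 1)) (x : X _⦋n + 2⦌),
      K.δ i.succ (η (n + 1) x) = η n (X.δ i.succ.succ x)) ∧
  (∀ (n : ℕ) (x : X _⦋n⦌), η n (X.σ 0 x) = 1) ∧
  (∀ (n : ℕ) (j : Fin (n + 1)) (x : X _⦋n + 1⦌),
      η (n + 1) (X.σ j.succ x) = K.σ j (η n x))


variable {K : SimplicialObject CommGrpCat.{0}} {X : SSet.{0}}

/-- The levelwise fiber product `(K ×_η X) ×_X (K ×_ρ X)`. -/
def TwFibProd (K : SimplicialObject CommGrpCat.{0}) (X : SSet.{0}) (n : ℕ) : Type :=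
  {p : ((K.obj (Opposite.op (SimplexCategory.mk n)) : Type) ×
          X.obj (Opposite.op (SimplexCategory.mk n))) ×
        ((K.obj (Opposite.op (SimplexCategory.mk n)) : Type) ×
          X.obj (Opposite.op (SimplexCategory.mk n))) // p.1.2 = p.2.2}

/-- The relation defining the tensor product of two twisted products:
`(k·e, f) ∼ (e, k·f)`. -/
def TwTensorRel (K : SimplicialObject CommGrpCat.{0}) (X : SSet.{0}) (n : ℕ)
    (a b : TwFibProd K X n) : Prop :=
  ∃ k : (K _⦋n⦌ : Type),
    b.1.1 = (k * a.1.1.1, a.1.1.2) ∧ b.1.2 = (k⁻¹ * a.1.2.1, a.1.2.2)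

/-- The face maps of the fiber product of the twisted products `K ×_η X` and
`K ×_ρ X`. -/
def TwFibProd.δ (η ρ : ∀ n, X _⦋n + 1⦌ → (K _⦋n⦌ : Type)) {n : ℕ} (i : Fin (n + 2))
    (a : TwFibProd K X (n + 1)) : TwFibProd K X n :=
  ⟨(twδ K X η i a.1.1, twδ K X ρ i a.1.2), by
    by_cases h : i = 0 <;> simp [twδ, h, a.2]⟩

/-- The degeneracy maps of the fiber product. -/
def TwFibProd.σ {n : ℕ} (i : Fin (n + 1)) (a : TwFibProd K X n) :
    TwFibProd K X (n + 1) :=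
  ⟨(twσ K X i a.1.1, twσ K X i a.1.2), by simp [twσ, a.2]⟩

/-- The `K`-action on the fiber product (on the first factor). -/
def TwFibProd.act {n : ℕ} (k : (K _⦋n⦌ : Type)) (a : TwFibProd K X n) :
    TwFibProd K X n :=
  ⟨((k * a.1.1.1, a.1.1.2), a.1.2), a.2⟩

/-- The comparison map `(K ×_η X) ×_X (K ×_ρ X) → K ×_{ηρ} X`,
`((k,x),(h,x)) ↦ (kh, x)`. -/
def TwTensorCompare (K : SimplicialObject CommGrpCat.{0}) (X : SSet.{0}) (n : ℕ)
    (a : TwFibProd K X n) : (K _⦋n⦌ : Type) × X _⦋n⦌ :=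
  (a.1.1.1 * a.1.2.1, a.1.1.2)

/-- For twisting functions `η, ρ` on `X` with values in a simplicial
Abelian group `K`, the map `[(k,x),(h,x)] ↦ (kh, x)` is an isomorphism of principal
`K`-bundles over `X` from `(K ×_η X) ⊗_K (K ×_ρ X)` to `K ×_{ηρ} X`: the levelwise
product `ηρ` is a twisting function, the comparison map is invariant under the tensor
relation, descends to a bijection on the quotient, is `K`-equivariant, lies over `X`,
and commutes with the twisted simplicial structure maps.  (In particular, the
cohomology class corresponding to the tensor product of two bundles is the sum of their
classes.) -/
theorem tensor_of_twisted_products (K : SimplicialObject CommGrpCat.{0}) (X : SSet.{0})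
    (η ρ : ∀ n, X _⦋n + 1⦌ → (K _⦋n⦌ : Type))
    (hη : IsTwisting K X η) (hρ : IsTwisting K X ρ) :
    -- the levelwise product of twisting functions is a twisting function
    IsTwisting K X (fun n x => η n x * ρ n x) ∧
    -- the comparison map is invariant under the tensor relation, hence descends
    (∀ (n : ℕ) (a b : TwFibProd K X n),
      TwTensorRel K X n a b → TwTensorCompare K X n a = TwTensorCompare K X n b) ∧
    -- conversely it identifies exactly the tensor relation, and is surjective:
    -- it descends to a bijection on the quotient
    (∀ (n : ℕ) (a b : TwFibProd K X n),
      TwTensorCompare K X n a = TwTensorCompare K X n b → TwTensorRel K X n a b) ∧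
    (∀ n : ℕ, Function.Surjective (TwTensorCompare K X n)) ∧
    -- it is `K`-equivariant
    (∀ (n : ℕ) (k : (K _⦋n⦌ : Type)) (a : TwFibProd K X n),
      TwTensorCompare K X n (TwFibProd.act k a) =
        (k * (TwTensorCompare K X n a).1, (TwTensorCompare K X n a).2)) ∧
    -- it lies over `X`
    (∀ (n : ℕ) (a : TwFibProd K X n),
      (TwTensorCompare K X n a).2 = a.1.1.2) ∧
    -- it commutes with the twisted simplicial structure maps
    (∀ (n : ℕ) (i : Fin (n + 2)) (a : TwFibProd K X (n + 1)),
      TwTensorCompare K X n (TwFibProd.δ η ρ i a) =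
        twδ K X (fun n x => η n x * ρ n x) i (TwTensorCompare K X (n + 1) a)) ∧
    (∀ (n : ℕ) (i : Fin (n + 1)) (a : TwFibProd K X n),
      TwTensorCompare K X (n + 1) (TwFibProd.σ i a) =
        twσ K X i (TwTensorCompare K X n a)) := by
  obtain ⟨hη0, hηi, hηs0, hηs⟩ := hη
  obtain ⟨hρ0, hρi, hρs0, hρs⟩ := hρ
  refine ⟨⟨?_, ?_, ?_, ?_⟩, ?_, ?_, ?_, ?_, ?_, ?_, ?_⟩
  · intro n x
    rw [map_mul, hη0, hρ0]
    rw [mul_inv]; exact mul_mul_mul_comm _ _ _ _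
  · intro n i x
    rw [map_mul, hηi, hρi]
  · intro n x
    show η n (X.σ 0 x) * ρ n (X.σ 0 x) = 1
    rw [hηs0, hρs0, one_mul]
  · intro n j x
    show η (n+1) (X.σ j.succ x) * ρ (n+1) (X.σ j.succ x) = K.σ j (η n x * ρ n x)
    rw [hηs, hρs, map_mul]
  · rintro n a b ⟨k, h1, h2⟩
    simp only [TwTensorCompare, h1, h2]
    refine Prod.ext ?_ rfl
    simp [mul_assoc, mul_left_comm, mul_comm]
  · intro n a b h
    simp only [TwTensorCompare, Prod.mk.injEq] at h
    obtain ⟨h1, h2⟩ := h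
    refine ⟨b.1.1.1 * a.1.1.1⁻¹, ?_, ?_⟩
    · refine Prod.ext ?_ h2.symm
      simp [mul_assoc]
    · refine Prod.ext ?_ ?_
      · have : b.1.2.1 = b.1.1.1⁻¹ * (a.1.1.1 * a.1.2.1) := by
          rw [h1]; group
        rw [this]
        simp [mul_assoc, mul_left_comm, mul_comm]
      · rw [← a.2, ← b.2, h2]
  · intro n p
    exact ⟨⟨((p.1, p.2), (1, p.2)), rfl⟩, by simp [TwTensorCompare]⟩
  · intro n k a
    simp [TwTensorCompare, TwFibProd.act, mul_assoc]
  · intro n a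
    rfl
  · intro n i a
    by_cases h : i = 0
    · subst h
      simp only [TwTensorCompare, TwFibProd.δ, twδ, if_pos rfl, map_mul, a.2]
      refine Prod.ext ?_ rfl
      simp [mul_assoc, mul_left_comm, mul_comm]
    · simp [TwTensorCompare, TwFibProd.δ, twδ, h, map_mul]
  · intro n i a
    simp [TwTensorCompare, TwFibProd.σ, twσ, map_mul]
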